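/- Let α be an arrow such that neither α nor f(α) is a loop, and set ζ_α = x_α x_{f(α)} x_{g(f(α))} in Λ. Then: (a) if ᾱ is virtual, then ζ_α = c_ᾱ c_α A_α; (b) if n_ᾱ = 3 = m_ᾱ n_ᾱ and f(ᾱ) is virtual, then ζ_α = c_ᾱ c_{f(ᾱ)} c_α A_α. -/

import Mathlib

/-- A triangulation quiver: a connected 2-regular quiver `(Q₀ = V, Q₁ = A, s, t)`
with at least two vertices, together with a permutation `f` of the arrows with
`t α = s (f α)` and `f³ = id`.  Two-regularity is encoded via the involution
`bar` on arrows (`bar α` is the unique arrow `≠ α` with the same source);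
the in-degree condition follows from `f` being a bijection. -/
structure TQ (V A : Type) [Fintype V] [DecidableEq V] [Fintype A] [DecidableEq A] where
  s : A → V
  t : A → V
  bar : A → A
  bar_ne : ∀ a, bar a ≠ a
  bar_invol : ∀ a, bar (bar a) = a
  s_bar : ∀ a, s (bar a) = s a
  bar_complete : ∀ a b, s b = s a → b = a ∨ b = bar a
  s_surj : ∀ i, ∃ a, s a = i
  f : Equiv.Perm A
  t_eq : ∀ a, t a = s (f a)
  f_cube : ∀ a, f (f (f a)) = a
  connected : ∀ i j : V, Relation.ReflTransGen
      (fun p q => ∃ e, (s e = p ∧ t e = q) ∨ (s e = q ∧ t e = p)) i j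
  two_vertices : 2 ≤ Fintype.card V

variable {V A : Type} [Fintype V] [DecidableEq V] [Fintype A] [DecidableEq A]

/-- The permutation `g` of arrows, `g α = \overline{f α}`. -/
def TQ.g (Q : TQ V A) (a : A) : A := Q.bar (Q.f a)

/-- `n α` is the length of the `g`-cycle of `α`. -/
noncomputable def TQ.n (Q : TQ V A) (a : A) : ℕ := Function.minimalPeriod Q.g a

/-- A loop is an arrow with equal source and target. -/
def TQ.IsLoop (Q : TQ V A) (a : A) : Prop := Q.s a = Q.t a

/-- A weight function: positive integers `m α`, constant on `g`-cycles. -/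
structure Weights (Q : TQ V A) where
  m : A → ℕ
  m_pos : ∀ a, 0 < m a
  m_g : ∀ a, m (Q.g a) = m a

/-- An arrow `α` is virtual if `m α * n α = 2`. -/
def Weights.Virtual {Q : TQ V A} (W : Weights Q) (a : A) : Prop := W.m a * Q.n a = 2

/-- The Assumption: (1) `m α n α ≥ 2` for all `α`; (2) `m α n α ≥ 3` whenever `ᾱ` is
virtual and not a loop; (3) `m α n α ≥ 4` whenever `ᾱ` is virtual and a loop. -/
def Weights.Assumption {Q : TQ V A} (W : Weights Q) : Prop :=
  (∀ a, 2 ≤ W.m a * Q.n a) ∧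
  (∀ a, W.Virtual (Q.bar a) → ¬ Q.IsLoop (Q.bar a) → 3 ≤ W.m a * Q.n a) ∧
  (∀ a, W.Virtual (Q.bar a) → Q.IsLoop (Q.bar a) → 4 ≤ W.m a * Q.n a)

/-- The data of an associative unital `K`-algebra `Λ` generated by pairwise orthogonal
idempotents `e i` summing to `1`, elements `x α ∈ e (s α) * Λ * e (t α)`, and nonzero
parameters `c α ∈ K` constant on `g`-cycles. -/
structure AlgData (Q : TQ V A) (W : Weights Q) (K : Type) [Field K]
    (Λ : Type) [Ring Λ] [Algebra K Λ] where
  e : V → Λ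
  x : A → Λ
  c : A → K
  c_ne : ∀ a, c a ≠ 0
  c_g : ∀ a, c (Q.g a) = c a
  e_orth : ∀ i j, e i * e j = if i = j then e i else 0
  e_sum : ∑ i, e i = 1
  x_sandwich : ∀ a, e (Q.s a) * x a * e (Q.t a) = x a

variable {Q : TQ V A} {W : Weights Q} {K : Type} [Field K] {Λ : Type} [Ring Λ] [Algebra K Λ]

/-- `B α = x_α x_{g α} ⋯ x_{g^{m_α n_α − 1} α}`, the full product along the `g`-cycle. -/
noncomputable def AlgData.B (D : AlgData Q W K Λ) (a : A) : Λ :=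
  ((List.range (W.m a * Q.n a)).map (fun k => D.x (Q.g^[k] a))).prod

/-- `A α = x_α x_{g α} ⋯ x_{g^{m_α n_α − 2} α}`, of length `m_α n_α − 1`. -/
noncomputable def AlgData.Apath (D : AlgData Q W K Λ) (a : A) : Λ :=
  ((List.range (W.m a * Q.n a - 1)).map (fun k => D.x (Q.g^[k] a))).prod

/-- The defining relations (R1), (R2), (R3) of a weighted surface algebra. -/
def AlgData.Rels (D : AlgData Q W K Λ) : Prop :=
  (∀ a, D.x a * D.x (Q.f a) = D.c (Q.bar a) • D.Apath (Q.bar a)) ∧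
  (∀ a, ¬ W.Virtual (Q.f (Q.f a)) →
      ¬ (W.Virtual (Q.f (Q.bar a)) ∧ W.m (Q.bar a) = 1 ∧ Q.n (Q.bar a) = 3) →
      D.x a * D.x (Q.f a) * D.x (Q.g (Q.f a)) = 0) ∧
  (∀ a, ¬ W.Virtual (Q.f a) →
      ¬ (W.Virtual (Q.f (Q.f a)) ∧ W.m (Q.f a) = 1 ∧ Q.n (Q.f a) = 3) →
      D.x a * D.x (Q.g a) * D.x (Q.f (Q.g a)) = 0)

/-- `J`: the two-sided ideal of `Λ` generated by the `x α`, as a `K`-submodule. -/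
def AlgData.J (D : AlgData Q W K Λ) : Submodule K Λ :=
  Submodule.span K {z | ∃ (a : A) (u v : Λ), z = u * D.x a * v}

/-!
Relation (R1) turns `x_α x_{f α}` into `c_ᾱ A_ᾱ`, a path along the `g`-cycle of `ᾱ`. Since that
cycle closes up after `n_ᾱ ≤ 3` steps, `g (f α) = f γ` for the last arrow `γ` of `A_ᾱ`, so (R1)
applies again to `x_γ x_{f γ}`. If `γ = ᾱ` this is `c_α A_α`; if `γ = g ᾱ` it is `c_{f ᾱ} x_{f ᾱ}`
because `f ᾱ` is virtual, and `x_ᾱ x_{f ᾱ} = c_α A_α` finishes.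
-/

namespace TQ

variable (Q : TQ V A)

lemma bar_g (a : A) : Q.bar (Q.g a) = Q.f a := Q.bar_invol _

lemma f_eq_bar_of_g_eq {a b : A} (h : Q.g a = b) : Q.f a = Q.bar b := by
  rw [← h, bar_g]

lemma g_iterate_n (a : A) : Q.g^[Q.n a] a = a := Function.iterate_minimalPeriod

lemma g_f_of_g_iterate_succ_bar {a : A} {k : ℕ} (h : Q.g^[k + 1] (Q.bar a) = Q.bar a) :
    Q.g (Q.f a) = Q.bar (Q.g^[k] (Q.bar a)) := by
  rw [Function.iterate_succ_apply'] at h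
  have hf : Q.f (Q.g^[k] (Q.bar a)) = a := by
    rw [Q.f_eq_bar_of_g_eq h, Q.bar_invol]
  have hff : Q.f (Q.f a) = Q.g^[k] (Q.bar a) := by
    simpa only [hf] using Q.f_cube (Q.g^[k] (Q.bar a))
  rw [g, hff]

lemma g_f_of_n_bar_dvd_two {a : A} (h : Q.n (Q.bar a) ∣ 2) :
    Q.g (Q.f a) = Q.f (Q.bar a) := by
  have hcycle := Q.g_iterate_n (Q.bar a)
  rcases (Nat.dvd_prime Nat.prime_two).mp h with hn | hn <;> rw [hn] at hcycle
  · rw [Q.g_f_of_g_iterate_succ_bar (k := 0) hcycle, Function.iterate_zero_apply]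
    rw [Function.iterate_one] at hcycle
    rw [← Q.bar_g, hcycle]
  · rw [Q.g_f_of_g_iterate_succ_bar (k := 1) hcycle, Function.iterate_one, bar_g]

lemma g_f_of_n_bar_eq_three {a : A} (h : Q.n (Q.bar a) = 3) :
    Q.g (Q.f a) = Q.f (Q.g (Q.bar a)) := by
  have hcycle := Q.g_iterate_n (Q.bar a)
  rw [h] at hcycle
  rw [Q.g_f_of_g_iterate_succ_bar (k := 2) hcycle, Function.iterate_succ_apply',
    Function.iterate_one, bar_g]

end TQ

namespace AlgData

variable (D : AlgData Q W K Λ)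

lemma Apath_of_virtual {b : A} (h : W.Virtual b) : D.Apath b = D.x b := by
  rw [Apath, show W.m b * Q.n b = 2 from h]
  simp [List.range_succ]

lemma Apath_of_mul_n_eq_three {b : A} (h : W.m b * Q.n b = 3) :
    D.Apath b = D.x b * D.x (Q.g b) := by
  rw [Apath, h]
  simp [List.range_succ]

variable {D}
variable (hR1 : ∀ a, D.x a * D.x (Q.f a) = D.c (Q.bar a) • D.Apath (Q.bar a))
include hR1

lemma zeta_of_virtual_bar {α : A} (hv : W.Virtual (Q.bar α)) :
    D.x α * D.x (Q.f α) * D.x (Q.g (Q.f α)) = (D.c (Q.bar α) * D.c α) • D.Apath α := by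
  have hgf := Q.g_f_of_n_bar_dvd_two (Dvd.intro_left _ hv)
  calc D.x α * D.x (Q.f α) * D.x (Q.g (Q.f α))
      = D.c (Q.bar α) • (D.x (Q.bar α) * D.x (Q.f (Q.bar α))) := by
        rw [hR1, hgf, D.Apath_of_virtual hv, smul_mul_assoc]
    _ = (D.c (Q.bar α) * D.c α) • D.Apath α := by
        rw [hR1, Q.bar_invol, smul_smul]

lemma zeta_of_n_bar_eq_three {α : A} (hn : Q.n (Q.bar α) = 3)
    (hmn : W.m (Q.bar α) * Q.n (Q.bar α) = 3) (hv : W.Virtual (Q.f (Q.bar α))) :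
    D.x α * D.x (Q.f α) * D.x (Q.g (Q.f α)) =
      (D.c (Q.bar α) * D.c (Q.f (Q.bar α)) * D.c α) • D.Apath α := by
  have hgf := Q.g_f_of_n_bar_eq_three hn
  calc D.x α * D.x (Q.f α) * D.x (Q.g (Q.f α))
      = D.c (Q.bar α) • (D.x (Q.bar α) *
          (D.x (Q.g (Q.bar α)) * D.x (Q.f (Q.g (Q.bar α))))) := by
        rw [hR1, hgf, D.Apath_of_mul_n_eq_three hmn, smul_mul_assoc, mul_assoc]
    _ = (D.c (Q.bar α) * D.c (Q.f (Q.bar α))) • (D.x (Q.bar α) * D.x (Q.f (Q.bar α))) := by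
        rw [hR1, Q.bar_g, D.Apath_of_virtual hv, mul_smul_comm, smul_smul]
    _ = (D.c (Q.bar α) * D.c (Q.f (Q.bar α)) * D.c α) • D.Apath α := by
        rw [hR1, Q.bar_invol, smul_smul]

end AlgData

theorem stmt9_general (Q : TQ V A) (W : Weights Q)
    {K : Type} [Field K] {Λ : Type} [Ring Λ] [Algebra K Λ]
    (D : AlgData Q W K Λ) (hR : D.Rels) (α : A) :
    (W.Virtual (Q.bar α) →
      D.x α * D.x (Q.f α) * D.x (Q.g (Q.f α)) = (D.c (Q.bar α) * D.c α) • D.Apath α) ∧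
    (Q.n (Q.bar α) = 3 → W.m (Q.bar α) * Q.n (Q.bar α) = 3 → W.Virtual (Q.f (Q.bar α)) →
      D.x α * D.x (Q.f α) * D.x (Q.g (Q.f α)) =
        (D.c (Q.bar α) * D.c (Q.f (Q.bar α)) * D.c α) • D.Apath α) :=
  ⟨AlgData.zeta_of_virtual_bar hR.1, AlgData.zeta_of_n_bar_eq_three hR.1⟩

/-- for `α` with neither `α` nor `f α` a loop:
(a) if `ᾱ` is virtual then `ζ_α = c_ᾱ c_α A_α`;
(b) if `n ᾱ = 3 = m ᾱ * n ᾱ` and `f ᾱ` is virtual then `ζ_α = c_ᾱ c_{f ᾱ} c_α A_α`. -/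
theorem stmt9 (Q : TQ V A) (W : Weights Q) (h3 : 3 ≤ Fintype.card V) (hA : W.Assumption)
    {K : Type} [Field K] {Λ : Type} [Ring Λ] [Algebra K Λ]
    (D : AlgData Q W K Λ) (hR : D.Rels) (α : A)
    (h1 : ¬ Q.IsLoop α) (h2 : ¬ Q.IsLoop (Q.f α)) :
    (W.Virtual (Q.bar α) →
      D.x α * D.x (Q.f α) * D.x (Q.g (Q.f α)) = (D.c (Q.bar α) * D.c α) • D.Apath α) ∧
    (Q.n (Q.bar α) = 3 → W.m (Q.bar α) * Q.n (Q.bar α) = 3 → W.Virtual (Q.f (Q.bar α)) →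
      D.x α * D.x (Q.f α) * D.x (Q.g (Q.f α)) =
        (D.c (Q.bar α) * D.c (Q.f (Q.bar α)) * D.c α) • D.Apath α) :=
  stmt9_general Q W D hR α
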